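/- For every a : ZMod d × ZMod d → ℂ with Σ_{r,s} |a_{r,s}|² = 1, the double-Bell vector Ψ_a has unit norm, and the partial trace over the fourth factor of its outer product recovers P_a: for all (i,j,k), (i',j',k') ∈ (ZMod d)³, d · Σ_{l} Ψ_a(i,j,k,l) · conj(Ψ_a(i',j',k',l)) = (P_a)_{(i,j,k),(i',j',k')}. -/

import Mathlib

/-!
Put `Φ_{rs}(i,j,k,l) = (1/d) (U_{rs}ᴴ)_{il} (U_{rs})_{jk}`, so that `Ψ_a = Σ_{r,s} a_{rs} Φ_{rs}`.
The Weyl–Heisenberg matrices are orthogonal for the Hilbert–Schmidt inner product,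
`Σ_{j,k} conj((U_{rs})_{jk}) (U_{r's'})_{jk} = d δ_{(r,s),(r',s')}` (a character sum over
`ZMod d`). As `⟪Φ_{rs}, Φ_{r's'}⟫` is `1/d²` times a product of two such sums, the `Φ_{rs}` are
orthonormal and `‖Ψ_a‖² = Σ |a_{rs}|² = 1`. The partial-trace identity is a bilinear expansion
in which the sum over `l` contracts `(U_{rs}ᴴ)_{il}` and `(U_{r's'})_{li'}` into
`(U_{rs}ᴴ U_{r's'})_{ii'}`.
-/

open Matrix Kronecker BigOperators

/-- ω = exp(2πi/d). -/
noncomputable def omega (d : ℕ) : ℂ := Complex.exp (2 * Real.pi * Complex.I / d)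

/-- The Weyl–Heisenberg matrix `U_{p,q}`. -/
noncomputable def WH (d : ℕ) [NeZero d] (p q : ZMod d) : Matrix (ZMod d) (ZMod d) ℂ :=
  fun j k => if j = k + p then omega d ^ (q.val * k.val) else 0

/-- The operator `P_a` on `(ℂ^d)^⊗3` associated to the coefficients `a`:
`(P_a)_{(i,j,k),(i',j',k')} = (1/d) Σ_{r,s,r',s'} a_{rs} conj(a_{r's'})
  (U_{rs}ᴴ U_{r's'})_{i,i'} (U_{rs})_{j,k} conj((U_{r's'})_{j',k'})`. -/
noncomputable def Pa (d : ℕ) [NeZero d] (a : ZMod d × ZMod d → ℂ) :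
    Matrix (ZMod d × ZMod d × ZMod d) (ZMod d × ZMod d × ZMod d) ℂ :=
  fun x y => (d : ℂ)⁻¹ * ∑ r : ZMod d, ∑ s : ZMod d, ∑ r' : ZMod d, ∑ s' : ZMod d,
    a (r, s) * (starRingEnd ℂ) (a (r', s')) * ((WH d r s)ᴴ * WH d r' s') x.1 y.1 *
      WH d r s x.2.1 x.2.2 * (starRingEnd ℂ) (WH d r' s' y.2.1 y.2.2)

/-- The double-Bell vector `Ψ_a(i,j,k,l) = (1/d) Σ_{r,s} a_{rs} (U_{rs}ᴴ)_{i,l} (U_{rs})_{j,k}`. -/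
noncomputable def PsiA (d : ℕ) [NeZero d] (a : ZMod d × ZMod d → ℂ) :
    ZMod d × ZMod d × ZMod d × ZMod d → ℂ :=
  fun x => (d : ℂ)⁻¹ * ∑ r : ZMod d, ∑ s : ZMod d,
    a (r, s) * (WH d r s)ᴴ x.1 x.2.2.2 * WH d r s x.2.1 x.2.2.1

open ComplexConjugate

theorem omega_pow_eq_stdAddChar (d : ℕ) [NeZero d] (n : ℕ) :
    omega d ^ n = ZMod.stdAddChar (n : ZMod d) := by
  rw [omega, ← Complex.exp_nat_mul, ZMod.stdAddChar_apply, ZMod.toCircle_natCast]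
  ring_nf

theorem WH_apply (d : ℕ) [NeZero d] (p q j k : ZMod d) :
    WH d p q j k = if j = k + p then ZMod.stdAddChar (q * k) else 0 := by
  rw [WH, omega_pow_eq_stdAddChar]
  push_cast
  simp only [ZMod.natCast_val, ZMod.cast_id', id]

theorem conj_stdAddChar {N : ℕ} [NeZero N] (x : ZMod N) :
    conj (ZMod.stdAddChar x) = ZMod.stdAddChar (-x) := by
  rw [ZMod.stdAddChar_apply, ZMod.stdAddChar_apply, ← Circle.coe_inv_eq_conj,
    AddChar.map_neg_eq_inv]

theorem sum_conj_stdAddChar_mul {N : ℕ} [NeZero N] (s s' : ZMod N) :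
    ∑ k : ZMod N, conj (ZMod.stdAddChar (s * k)) * ZMod.stdAddChar (s' * k) =
      if s = s' then (N : ℂ) else 0 := by
  simp_rw [conj_stdAddChar, ← AddChar.map_add_eq_mul]
  have := AddChar.sum_mulShift (s' - s) (ZMod.isPrimitive_stdAddChar N)
  simp only [ZMod.card, sub_eq_zero, eq_comm (a := s'), Nat.cast_ite, Nat.cast_zero] at this
  rw [← this]
  congr 1 with k
  ring_nf

theorem sum_conj_WH_mul_WH (d : ℕ) [NeZero d] (r s r' s' : ZMod d) :
    ∑ j, ∑ k, conj (WH d r s j k) * WH d r' s' j k =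
      if (r, s) = (r', s') then (d : ℂ) else 0 := by
  rw [Finset.sum_comm]
  simp only [WH_apply, apply_ite conj, map_zero, ite_mul, mul_ite, zero_mul, mul_zero,
    Finset.sum_ite_eq', Finset.mem_univ, if_true, add_right_inj, Prod.mk.injEq]
  by_cases hr : r = r'
  · simp [hr, sum_conj_stdAddChar_mul]
  · simp [hr, Ne.symm hr]

theorem sum_quadruple_mul {α R : Type*} [Fintype α] [CommSemiring R] (f g : α → α → R) :
    ∑ x : α × α × α × α, f x.1 x.2.2.2 * g x.2.1 x.2.2.1 =
      (∑ i, ∑ l, f i l) * ∑ j, ∑ k, g j k := by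
  simp only [Fintype.sum_prod_type, Finset.sum_mul_sum]
  exact Finset.sum_congr rfl fun i _ => Finset.sum_congr rfl fun j _ => Finset.sum_comm

noncomputable def doubleBell (d : ℕ) [NeZero d] (rs : ZMod d × ZMod d) :
    EuclideanSpace ℂ (ZMod d × ZMod d × ZMod d × ZMod d) :=
  WithLp.toLp 2 fun x =>
    (d : ℂ)⁻¹ * ((WH d rs.1 rs.2)ᴴ x.1 x.2.2.2 * WH d rs.1 rs.2 x.2.1 x.2.2.1)

theorem orthonormal_doubleBell (d : ℕ) [NeZero d] : Orthonormal ℂ (doubleBell d) := by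
  rw [orthonormal_iff_ite]
  rintro ⟨r, s⟩ ⟨r', s'⟩
  have hd : (d : ℂ) ≠ 0 := NeZero.ne _
  simp only [PiLp.inner_apply, doubleBell, RCLike.inner_apply, conjTranspose_apply, map_mul,
    map_inv₀, Complex.conj_natCast, RCLike.star_def, Complex.conj_conj]
  calc _ = (d : ℂ)⁻¹ ^ 2 * ∑ x : ZMod d × ZMod d × ZMod d × ZMod d,
        (conj (WH d r' s' x.2.2.2 x.1) * WH d r s x.2.2.2 x.1) *
          (conj (WH d r s x.2.1 x.2.2.1) * WH d r' s' x.2.1 x.2.2.1) := by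
        rw [Finset.mul_sum]
        congr 1 with x
        ring
    _ = (d : ℂ)⁻¹ ^ 2 * ((if (r', s') = (r, s) then (d : ℂ) else 0) *
          if (r, s) = (r', s') then (d : ℂ) else 0) := by
        rw [sum_quadruple_mul (fun i l => conj (WH d r' s' l i) * WH d r s l i)
          fun j k => conj (WH d r s j k) * WH d r' s' j k, Finset.sum_comm,
          sum_conj_WH_mul_WH, sum_conj_WH_mul_WH]
    _ = if (r, s) = (r', s') then 1 else 0 := by
        simp only [eq_comm (a := (r', s'))]
        split_ifs
        · field_simp
        · simp

theorem Orthonormal.norm_sum_smul_sq {ι 𝕜 E : Type*} [Fintype ι] [RCLike 𝕜]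
    [NormedAddCommGroup E] [InnerProductSpace 𝕜 E] {v : ι → E} (hv : Orthonormal 𝕜 v)
    (l : ι → 𝕜) : ‖∑ i, l i • v i‖ ^ 2 = ∑ i, ‖l i‖ ^ 2 := by
  rw [@norm_sq_eq_re_inner 𝕜, hv.inner_sum, map_sum]
  exact Finset.sum_congr rfl fun i _ => by
    rw [RCLike.conj_mul, ← RCLike.ofReal_pow, RCLike.ofReal_re]

theorem PsiA_eq_sum_doubleBell (d : ℕ) [NeZero d] (a : ZMod d × ZMod d → ℂ) :
    PsiA d a = WithLp.ofLp (∑ rs, a rs • doubleBell d rs) := by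
  ext x
  simp only [PsiA, doubleBell, WithLp.ofLp_sum, WithLp.ofLp_smul, Finset.sum_apply,
    Pi.smul_apply, smul_eq_mul, Fintype.sum_prod_type, Finset.mul_sum]
  exact Finset.sum_congr rfl fun r _ => Finset.sum_congr rfl fun s _ => by ring

theorem sum_norm_PsiA_sq (d : ℕ) [NeZero d] (a : ZMod d × ZMod d → ℂ) :
    ∑ x, ‖PsiA d a x‖ ^ 2 = ∑ rs, ‖a rs‖ ^ 2 := by
  rw [PsiA_eq_sum_doubleBell, ← (orthonormal_doubleBell d).norm_sum_smul_sq,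
    EuclideanSpace.norm_sq_eq]

theorem PsiA_partialTrace (d : ℕ) [NeZero d] (a : ZMod d × ZMod d → ℂ)
    (i j k i' j' k' : ZMod d) :
    (d : ℂ) * ∑ l, PsiA d a (i, j, k, l) * conj (PsiA d a (i', j', k', l)) =
      Pa d a (i, j, k) (i', j', k') := by
  simp only [PsiA, map_mul, map_sum, map_inv₀, Complex.conj_natCast,
    mul_mul_mul_comm _ (∑ _, _)]
  simp_rw [Finset.sum_mul]
  simp_rw [Finset.mul_sum]
  simp only [Pa, mul_apply, Finset.mul_sum, Finset.sum_mul]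
  rw [Finset.sum_comm]; refine Finset.sum_congr rfl fun r _ => ?_
  rw [Finset.sum_comm]; refine Finset.sum_congr rfl fun s _ => ?_
  rw [Finset.sum_comm]; refine Finset.sum_congr rfl fun r' _ => ?_
  rw [Finset.sum_comm]
  refine Finset.sum_congr rfl fun s' _ => Finset.sum_congr rfl fun l _ => ?_
  rw [conjTranspose_apply, conjTranspose_apply, RCLike.star_def, Complex.conj_conj]
  field_simp

/-- For normalized `a`, the double-Bell vector `Ψ_a` is a unit vector and the partial trace
over the fourth factor of `|Ψ_a⟩⟨Ψ_a|` (times d) recovers `P_a`. -/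
theorem PsiA_unit_and_partial_trace (d : ℕ) [NeZero d] (a : ZMod d × ZMod d → ℂ)
    (ha : ∑ rs : ZMod d × ZMod d, ‖a rs‖ ^ 2 = 1) :
    (∑ x : ZMod d × ZMod d × ZMod d × ZMod d, ‖PsiA d a x‖ ^ 2 = 1) ∧
    (∀ i j k i' j' k' : ZMod d,
      (d : ℂ) * ∑ l : ZMod d, PsiA d a (i, j, k, l) * (starRingEnd ℂ) (PsiA d a (i', j', k', l)) =
        Pa d a (i, j, k) (i', j', k')) :=
  ⟨(sum_norm_PsiA_sq d a).trans ha, PsiA_partialTrace d a⟩
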